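/- arXiv:1204.4014 — 6 statements merged into one kernel-verified Lean document; each statement's English description precedes it below -/
import Mathlib

section
/- If G is a primitive graph with diameter d, then its exponent satisfies γ(G) ≤ 2d. -/
/-- Existence of a walk of length `k` from `x` to `y` in the graph with adjacency
relation `adj` (loops allowed, no parallel edges). -/
def GWalk {V : Type*} (adj : V → V → Prop) : ℕ → V → V → Prop
  | 0, x, y => x = y
  | k + 1, x, y => ∃ z, adj x z ∧ GWalk adj k z y

/-- Distance: the length of a shortest walk (= shortest path) from `x` to `y`. -/
noncomputable def GDist {V : Type*} (adj : V → V → Prop) (x y : V) : ℕ :=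
  sInf {k | GWalk adj k x y}

/-- The graph is connected: any two vertices are joined by some walk. -/
def GConnected {V : Type*} (adj : V → V → Prop) : Prop :=
  ∀ x y, ∃ k, GWalk adj k x y

/-- The graph contains a closed walk of odd length (an "odd cycle"). -/
def HasOddClosedWalk {V : Type*} (adj : V → V → Prop) : Prop :=
  ∃ (x : V) (k : ℕ), Odd k ∧ GWalk adj k x x

/-- The graph is primitive: some `γ` works as an exponent. -/
def GPrimitive {V : Type*} (adj : V → V → Prop) : Prop :=
  ∃ γ : ℕ, ∀ x y : V, ∀ k ≥ γ, GWalk adj k x y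

/-- Adjacency of the Kronecker (tensor) product. -/
def KronAdj {V₁ V₂ : Type*} (adj₁ : V₁ → V₁ → Prop) (adj₂ : V₂ → V₂ → Prop) :
    V₁ × V₂ → V₁ × V₂ → Prop :=
  fun a b => adj₁ a.1 b.1 ∧ adj₂ a.2 b.2

section Aux
variable {V : Type*} {adj : V → V → Prop}

lemma gwalk_append {m n : ℕ} {x z y : V} (h1 : GWalk adj m x z) (h2 : GWalk adj n z y) :
    GWalk adj (m + n) x y := by
  induction m generalizing x with
  | zero =>
      have hx : x = z := h1
      subst hx
      simpa using h2
  | succ m ih =>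
      obtain ⟨w, hw, h1'⟩ := h1
      have hmn : m + 1 + n = (m + n) + 1 := by omega
      rw [hmn]
      exact ⟨w, hw, ih h1'⟩

lemma gwalk_pad (hsymm : Symmetric adj) {x w y : V} (hxw : adj x w) {n : ℕ}
    (h : GWalk adj n x y) : ∀ t, GWalk adj (2 * t + n) x y
  | 0 => by simpa using h
  | t + 1 => by
      have he : 2 * (t + 1) + n = (2 * t + n) + 1 + 1 := by omega
      rw [he]
      exact ⟨w, hxw, x, hsymm hxw, gwalk_pad hsymm hxw h t⟩

end Aux

theorem stmt2 {V : Type*} [Fintype V] [Nonempty V] (adj : V → V → Prop)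
    (hsymm : Symmetric adj) (γ d : ℕ)
    (hγ : IsLeast {m : ℕ | ∀ x y : V, ∀ k ≥ m, GWalk adj k x y} γ)
    (hd : IsGreatest {m : ℕ | ∃ x y : V, m = GDist adj x y} d) :
    γ ≤ 2 * d := by
  obtain ⟨hγmem, hγlb⟩ := hγ
  obtain ⟨hdmem, hdub⟩ := hd
  have hne : ∀ x y : V, {k | GWalk adj k x y}.Nonempty :=
    fun x y => ⟨γ, hγmem x y γ le_rfl⟩
  have hdist_walk : ∀ x y : V, GWalk adj (GDist adj x y) x y :=
    fun x y => Nat.sInf_mem (hne x y)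
  have hdist_le : ∀ x y : V, GDist adj x y ≤ d := fun x y => hdub ⟨x, y, rfl⟩
  have hnbr : ∀ x : V, ∃ w, adj x w := by
    intro x
    obtain ⟨w, hw, -⟩ := hγmem x x (γ + 1) (by omega)
    exact ⟨w, hw⟩
  -- key parity lemma: along a walk of odd "defect" there are adjacent vertices with
  -- equal-parity distances from x
  have key : ∀ x : V, ∀ n : ℕ, ∀ a b : V, GWalk adj n a b →
      (GDist adj x a + n + GDist adj x b) % 2 = 1 →
      ∃ z z', adj z z' ∧ (GDist adj x z + GDist adj x z') % 2 = 0 := by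
    intro x n
    induction n with
    | zero =>
        intro a b hab hodd
        have hx : a = b := hab
        subst hx
        omega
    | succ n ih =>
        intro a b hab hodd
        obtain ⟨c, hac, hcb⟩ := hab
        by_cases hpar : (GDist adj x a + GDist adj x c) % 2 = 0
        · exact ⟨a, c, hac, hpar⟩
        · exact ih c b hcb (by omega)
  refine hγlb ?_
  intro x y k hk
  obtain ⟨v0⟩ := ‹Nonempty V›
  have hodd0 : GWalk adj (2 * γ + 1) v0 v0 := hγmem v0 v0 _ (by omega)
  obtain ⟨z, z', hzz', hpar⟩ := key x (2 * γ + 1) v0 v0 hodd0 (by omega)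
  obtain ⟨w, hw⟩ := hnbr x
  -- walk 1 : x → z → y, length m₁ ≤ 2d
  have w1 : GWalk adj (GDist adj x z + GDist adj z y) x y :=
    gwalk_append (hdist_walk x z) (hdist_walk z y)
  -- walk 2 : x → z' → z → y, length m₂ ≤ 2d + 1, opposite parity to m₁
  have wzz : GWalk adj 1 z' z := ⟨z, hsymm hzz', rfl⟩
  have w2 : GWalk adj (GDist adj x z' + 1 + GDist adj z y) x y :=
    gwalk_append (gwalk_append (hdist_walk x z') wzz) (hdist_walk z y)
  by_cases hcase : (GDist adj x z + GDist adj z y) % 2 = k % 2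
  · -- use w1 and pad
    have hm1 : GDist adj x z + GDist adj z y ≤ k := by
      have := hdist_le x z; have := hdist_le z y; omega
    have hkeq : k = 2 * ((k - (GDist adj x z + GDist adj z y)) / 2) +
        (GDist adj x z + GDist adj z y) := by omega
    rw [hkeq]
    exact gwalk_pad hsymm hw w1 _
  · -- use w2 and pad
    have hm2par : (GDist adj x z' + 1 + GDist adj z y) % 2 = k % 2 := by omega
    have hm2 : GDist adj x z' + 1 + GDist adj z y ≤ k := by
      have := hdist_le x z'; have := hdist_le z y; omega
    have hkeq : k = 2 * ((k - (GDist adj x z' + 1 + GDist adj z y)) / 2) +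
        (GDist adj x z' + 1 + GDist adj z y) := by omega
    rw [hkeq]
    exact gwalk_pad hsymm hw w2 _
end

section
/- Let G be a primitive graph with odd exponent γ and at least 2 vertices. Then (a) there exist vertices x, y such that the minimum length of an odd (x,y)-walk is exactly γ, and (b) there exist distinct vertices u, v such that the minimum length of an even (u,v)-walk is exactly γ + 1. -/
/-- Appending an edge to a walk. -/
lemma gwalk_snoc {V : Type*} {adj : V → V → Prop} :
    ∀ (k : ℕ) (u w v : V), GWalk adj k u w → adj w v → GWalk adj (k + 1) u v := by
  intro k
  induction k with
  | zero =>
    intro u w v h hadj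
    simp only [GWalk] at h ⊢
    exact ⟨v, h ▸ hadj, rfl⟩
  | succ n ih =>
    intro u w v h hadj
    obtain ⟨z, hz, hw⟩ := h
    exact ⟨z, hz, ih z w v hw hadj⟩

section Main

variable {V : Type*} {adj : V → V → Prop}

/-- Every vertex has a neighbor, assuming walks of some positive length exist everywhere. -/
lemma exists_neighbor (x : V) (k : ℕ) (y : V) (h : GWalk adj (k + 1) x y) :
    ∃ z, adj x z := by
  obtain ⟨z, hz, _⟩ := h
  exact ⟨z, hz⟩

/-- Extend a walk by 2, given the start vertex has a neighbor. -/
lemma gwalk_add_two (hsymm : Symmetric adj) {x y : V} {k : ℕ}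
    (hn : ∃ z, adj x z) (h : GWalk adj k x y) : GWalk adj (k + 2) x y := by
  obtain ⟨z, hz⟩ := hn
  exact ⟨z, hz, ⟨x, hsymm hz, h⟩⟩

lemma gwalk_add_two_mul (hsymm : Symmetric adj) {x y : V} {k : ℕ}
    (hn : ∀ a : V, ∃ z, adj a z) (h : GWalk adj k x y) (n : ℕ) :
    GWalk adj (k + 2 * n) x y := by
  induction n with
  | zero => simpa using h
  | succ m ih =>
    have : k + 2 * (m + 1) = (k + 2 * m) + 2 := by ring
    rw [this]
    exact gwalk_add_two hsymm (hn x) ih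

/-- Closed walks of every even length exist. -/
lemma gwalk_closed_even (hsymm : Symmetric adj) (hn : ∀ a : V, ∃ z, adj a z)
    (x : V) (m : ℕ) : GWalk adj (2 * m) x x := by
  have h0 : GWalk adj 0 x x := rfl
  have := gwalk_add_two_mul hsymm hn h0 m
  simpa using this

end Main

theorem stmt6 {V : Type*} [Nontrivial V] (adj : V → V → Prop) (hsymm : Symmetric adj)
    (γ : ℕ) (hγ : IsLeast {m : ℕ | ∀ x y : V, ∀ k ≥ m, GWalk adj k x y} γ)
    (hodd : Odd γ) :
    (∃ x y : V, IsLeast {k : ℕ | Odd k ∧ GWalk adj k x y} γ) ∧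
    (∃ u v : V, u ≠ v ∧ IsLeast {k : ℕ | Even k ∧ GWalk adj k u v} (γ + 1)) := by
  obtain ⟨m, hm⟩ := hodd
  -- γ = 2m + 1
  have hγ1 : γ = 2 * m + 1 := hm
  have hexp : ∀ x y : V, ∀ k ≥ γ, GWalk adj k x y := hγ.1
  -- every vertex has a neighbor
  have hn : ∀ a : V, ∃ z, adj a z := by
    intro a
    have := hexp a a γ le_rfl
    rw [hγ1] at this
    exact exists_neighbor a (2 * m) a this
  -- since γ - 1 = 2m is not an exponent, some pair lacks a 2m-walk
  have hfail : ∃ u v : V, ¬ GWalk adj (2 * m) u v := by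
    by_contra hcon
    push_neg at hcon
    have hmem : (2 * m) ∈ {m' : ℕ | ∀ x y : V, ∀ k ≥ m', GWalk adj k x y} := by
      intro x y k hk
      rcases Nat.even_or_odd k with he | ho
      · -- k even, k ≥ 2m : k = 2m + 2n
        obtain ⟨j, hj⟩ := he
        have hjm : m ≤ j := by omega
        have : k = 2 * m + 2 * (j - m) := by omega
        rw [this]
        exact gwalk_add_two_mul hsymm hn (hcon x y) (j - m)
      · -- k odd, k ≥ 2m ⇒ k ≥ 2m+1 = γ
        have : k ≥ γ := by
          obtain ⟨j, hj⟩ := ho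
          omega
        exact hexp x y k this
    have := hγ.2 hmem
    omega
  obtain ⟨u, v, huv⟩ := hfail
  -- u ≠ v, since closed even walks always exist
  have hne : u ≠ v := by
    intro h
    subst h
    exact huv (gwalk_closed_even hsymm hn u m)
  -- a neighbor w of v
  obtain ⟨w, hvw⟩ := hn v
  constructor
  · -- part (a): pair (u, w), least odd walk length is γ
    refine ⟨u, w, ⟨⟨⟨m, hm⟩, hexp u w γ le_rfl⟩, ?_⟩⟩
    rintro k ⟨⟨j, hj⟩, hwalk⟩
    by_contra hlt
    push_neg at hlt
    -- k odd, k < γ = 2m+1, so k ≤ 2m-1 and m ≥ 1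
    have hjm : j + 1 ≤ m := by omega
    -- extend to length 2m - 1 = k + 2*(m-1-j)
    have h2 : GWalk adj (k + 2 * (m - 1 - j)) u w :=
      gwalk_add_two_mul hsymm hn hwalk (m - 1 - j)
    have hk2 : k + 2 * (m - 1 - j) + 1 = 2 * m := by omega
    have h3 : GWalk adj (k + 2 * (m - 1 - j) + 1) u v :=
      gwalk_snoc _ u w v h2 (hsymm hvw)
    rw [hk2] at h3
    exact huv h3
  · -- part (b): pair (u, v), least even walk length is γ + 1
    refine ⟨u, v, hne, ⟨⟨⟨m + 1, by omega⟩, hexp u v (γ + 1) (by omega)⟩, ?_⟩⟩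
    rintro k ⟨⟨j, hj⟩, hwalk⟩
    by_contra hlt
    push_neg at hlt
    -- k even, k < γ + 1 = 2m + 2, so k ≤ 2m
    have hjm : j ≤ m := by omega
    have h2 : GWalk adj (k + 2 * (m - j)) u v :=
      gwalk_add_two_mul hsymm hn hwalk (m - j)
    have hk2 : k + 2 * (m - j) = 2 * m := by omega
    rw [hk2] at h2
    exact huv h2
end

section
/- Let G be a primitive graph with even exponent γ and at least 2 vertices. Then (a) there exist distinct vertices p, q such that the minimum length of an even (p,q)-walk is exactly γ, and (b) there exist vertices w, s such that the minimum length of an odd (w,s)-walk is exactly γ + 1. -/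
lemma GWalk_trans {V : Type*} {adj : V → V → Prop} :
    ∀ {m : ℕ} {x y w : V}, GWalk adj m x y → ∀ {n}, GWalk adj n y w →
      GWalk adj (m + n) x w := by
  intro m
  induction m with
  | zero => intro x y w h n h2; cases h; simpa using h2
  | succ k ih =>
    rintro x y w ⟨z, hxz, hz⟩ n h2
    have : k + 1 + n = (k + n) + 1 := by omega
    rw [this]
    exact ⟨z, hxz, ih hz h2⟩

lemma GWalk_add_two {V : Type*} {adj : V → V → Prop} (hsymm : Symmetric adj)
    {k : ℕ} {x y z : V} (hyz : adj y z) (h : GWalk adj k x y) :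
    GWalk adj (k + 2) x y :=
  GWalk_trans h (⟨z, hyz, y, hsymm hyz, rfl⟩ : GWalk adj 2 y y)

lemma GWalk_add_even {V : Type*} {adj : V → V → Prop} (hsymm : Symmetric adj)
    {x y z : V} (hyz : adj y z) :
    ∀ t : ℕ, ∀ {k : ℕ}, GWalk adj k x y → GWalk adj (k + 2 * t) x y := by
  intro t
  induction t with
  | zero => intro k h; simpa using h
  | succ n ih =>
    intro k h
    have : k + 2 * (n + 1) = (k + 2 * n) + 2 := by omega
    rw [this]
    exact GWalk_add_two hsymm hyz (ih h)

theorem stmt7 {V : Type*} [Nontrivial V] (adj : V → V → Prop) (hsymm : Symmetric adj)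
    (γ : ℕ) (hγ : IsLeast {m : ℕ | ∀ x y : V, ∀ k ≥ m, GWalk adj k x y} γ)
    (heven : Even γ) :
    (∃ p q : V, p ≠ q ∧ IsLeast {k : ℕ | Even k ∧ GWalk adj k p q} γ) ∧
    (∃ w s : V, IsLeast {k : ℕ | Odd k ∧ GWalk adj k w s} (γ + 1)) := by
  obtain ⟨hmem, hlb⟩ := hγ
  -- γ ≥ 2
  have hγpos : 1 ≤ γ := by
    by_contra h
    have hγ0 : γ = 0 := by omega
    obtain ⟨a, b, hab⟩ := exists_pair_ne V
    exact hab (hmem a b 0 (by omega))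
  obtain ⟨c, hc⟩ := id heven
  have hγ2 : 2 ≤ γ := by omega
  -- pair with no walk of length γ - 1
  have hfail : ∃ x y : V, ¬ GWalk adj (γ - 1) x y := by
    by_contra h
    push_neg at h
    have : (γ - 1) ∈ {m : ℕ | ∀ x y : V, ∀ k ≥ m, GWalk adj k x y} := by
      intro x y k hk
      rcases eq_or_lt_of_le hk with heq | hlt
      · rw [← heq]; exact h x y
      · exact hmem x y k (by omega)
    have := hlb this
    omega
  obtain ⟨x, y, hno⟩ := hfail
  -- y has a neighbor
  have hy : ∃ z, adj y z := by
    have := hmem y y γ le_rfl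
    obtain ⟨m, rfl⟩ : ∃ m, γ = m + 1 := ⟨γ - 1, by omega⟩
    obtain ⟨z, hyz, -⟩ := this
    exact ⟨z, hyz⟩
  obtain ⟨z₀, hyz₀⟩ := hy
  -- no odd walk x → y of length ≤ γ - 1
  have hodd_no : ∀ k, Odd k → k ≤ γ - 1 → GWalk adj k x y → False := by
    intro k hk hkle hw
    obtain ⟨a, rfl⟩ := hk
    have ht : (2 * a + 1) + 2 * ((γ - 1 - (2 * a + 1)) / 2) = γ - 1 := by omega
    have := GWalk_add_even hsymm hyz₀ ((γ - 1 - (2 * a + 1)) / 2) hw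
    rw [ht] at this
    exact hno this
  constructor
  · -- part (a)
    obtain ⟨z, hxz, hz⟩ := hmem x y (γ + 1) (by omega)
    have hzy : z ≠ y := by
      intro he
      have h1 : GWalk adj 1 x y := ⟨z, hxz, he⟩
      exact hodd_no 1 ⟨0, rfl⟩ (by omega) h1
    refine ⟨z, y, hzy, ⟨⟨heven, hmem z y γ le_rfl⟩, ?_⟩⟩
    rintro k ⟨hke, hkw⟩
    by_contra h
    push_neg at h
    have hk1 : GWalk adj (k + 1) x y := ⟨z, hxz, hkw⟩
    obtain ⟨b, rfl⟩ := hke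
    exact hodd_no (b + b + 1) ⟨b, by omega⟩ (by omega) hk1
  · -- part (b)
    refine ⟨x, y, ⟨⟨⟨c, by omega⟩, hmem x y (γ + 1) (by omega)⟩, ?_⟩⟩
    rintro k ⟨hko, hkw⟩
    by_contra h
    push_neg at h
    obtain ⟨a, rfl⟩ := hko
    exact hodd_no (2 * a + 1) ⟨a, by omega⟩ (by omega) hkw
end

section
/- Let G₁, G₂ be primitive graphs, G = G₁ ⊗ G₂, and let x = (x₁,x₂), y = (y₁,y₂) be distinct vertices of G. If the shortest odd (x₁,y₁)-walk in G₁ has length m and the shortest even (x₂,y₂)-walk in G₂ has length n, then the distance d_G(x,y) ≥ min{m, n}. -/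
lemma kron_proj {V₁ V₂ : Type*} (adj₁ : V₁ → V₁ → Prop) (adj₂ : V₂ → V₂ → Prop) :
    ∀ (k : ℕ) (a b : V₁ × V₂), GWalk (KronAdj adj₁ adj₂) k a b →
      GWalk adj₁ k a.1 b.1 ∧ GWalk adj₂ k a.2 b.2 := by
  intro k
  induction k with
  | zero => intro a b h; cases h; exact ⟨rfl, rfl⟩
  | succ k ih =>
    rintro a b ⟨z, ⟨h1, h2⟩, hw⟩
    obtain ⟨w1, w2⟩ := ih z b hw
    exact ⟨⟨z.1, h1, w1⟩, ⟨z.2, h2, w2⟩⟩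

lemma kron_pair {V₁ V₂ : Type*} (adj₁ : V₁ → V₁ → Prop) (adj₂ : V₂ → V₂ → Prop) :
    ∀ (k : ℕ) (a b : V₁ × V₂), GWalk adj₁ k a.1 b.1 → GWalk adj₂ k a.2 b.2 →
      GWalk (KronAdj adj₁ adj₂) k a b := by
  intro k
  induction k with
  | zero =>
    intro a b h1 h2
    exact Prod.ext h1 h2
  | succ k ih =>
    rintro a b ⟨z1, h1, w1⟩ ⟨z2, h2, w2⟩
    exact ⟨(z1, z2), ⟨h1, h2⟩, ih (z1, z2) b w1 w2⟩

theorem stmt8 {V₁ V₂ : Type*} (adj₁ : V₁ → V₁ → Prop) (adj₂ : V₂ → V₂ → Prop)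
    (hsymm₁ : Symmetric adj₁) (hsymm₂ : Symmetric adj₂)
    (hprim₁ : GPrimitive adj₁) (hprim₂ : GPrimitive adj₂)
    (x₁ y₁ : V₁) (x₂ y₂ : V₂) (hne : (x₁, x₂) ≠ (y₁, y₂)) (m n : ℕ)
    (hm : IsLeast {k : ℕ | Odd k ∧ GWalk adj₁ k x₁ y₁} m)
    (hn : IsLeast {k : ℕ | Even k ∧ GWalk adj₂ k x₂ y₂} n) :
    min m n ≤ GDist (KronAdj adj₁ adj₂) (x₁, x₂) (y₁, y₂) := by
  obtain ⟨γ₁, hγ₁⟩ := hprim₁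
  obtain ⟨γ₂, hγ₂⟩ := hprim₂
  have hne' : {k | GWalk (KronAdj adj₁ adj₂) k (x₁, x₂) (y₁, y₂)}.Nonempty := by
    refine ⟨γ₁ + γ₂, kron_pair adj₁ adj₂ _ _ _ ?_ ?_⟩
    · exact hγ₁ x₁ y₁ _ (Nat.le_add_right _ _)
    · exact hγ₂ x₂ y₂ _ (Nat.le_add_left _ _)
  have hd : GDist (KronAdj adj₁ adj₂) (x₁, x₂) (y₁, y₂) ∈
      {k | GWalk (KronAdj adj₁ adj₂) k (x₁, x₂) (y₁, y₂)} := Nat.sInf_mem hne'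
  set d := GDist (KronAdj adj₁ adj₂) (x₁, x₂) (y₁, y₂) with hdef
  obtain ⟨w1, w2⟩ := kron_proj adj₁ adj₂ d _ _ hd
  rcases Nat.even_or_odd d with he | ho
  · exact le_trans (min_le_right m n) (hn.2 ⟨he, w2⟩)
  · exact le_trans (min_le_left m n) (hm.2 ⟨ho, w1⟩)
end

section
/- For p ≥ 3, the exponent of H_{n,p} equals 2n − 2p + 2, where H_{n,p} is obtained by joining the end-vertex of a path on n − p vertices to a vertex of the complete graph K_p by an edge. -/
/-- Adjacency of the graph `H_{n,p}`: the complete graph `K_p` on vertices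
`n-p, …, n-1` joined by an edge to the end of the path on vertices `0, …, n-p-1`. -/
def HAdj (n p : ℕ) (a b : Fin n) : Prop :=
  (a.val + 1 = b.val ∨ b.val + 1 = a.val) ∨ (a ≠ b ∧ n - p ≤ a.val ∧ n - p ≤ b.val)

lemma gwalk_concat {V : Type*} {adj : V → V → Prop} :
    ∀ (k l : ℕ) (x y z : V), GWalk adj k x y → GWalk adj l y z →
      GWalk adj (k + l) x z := by
  intro k
  induction k with
  | zero =>
    intro l x y z h1 h2
    have hxy : x = y := h1
    subst hxy
    rw [Nat.zero_add]
    exact h2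
  | succ k ih =>
    intro l x y z h1 h2
    obtain ⟨w, ha, hw⟩ := h1
    have : k + 1 + l = (k + l) + 1 := by omega
    rw [this]
    exact ⟨w, ha, ih l w y z hw h2⟩

lemma walk_up (n p : ℕ) : ∀ (d : ℕ) (a b : Fin n), a.val + d = b.val →
    GWalk (HAdj n p) d a b := by
  intro d
  induction d with
  | zero => intro a b h; exact Fin.ext (by omega)
  | succ d ih =>
    intro a b h
    have hlt : a.val + 1 < n := by have := b.isLt; omega
    refine ⟨⟨a.val + 1, hlt⟩, Or.inl (Or.inl rfl), ih _ b (by simp; omega)⟩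

lemma walk_down (n p : ℕ) : ∀ (d : ℕ) (a b : Fin n), b.val + d = a.val →
    GWalk (HAdj n p) d a b := by
  intro d
  induction d with
  | zero => intro a b h; exact Fin.ext (by omega)
  | succ d ih =>
    intro a b h
    have hlt : a.val - 1 < n := by have := a.isLt; omega
    refine ⟨⟨a.val - 1, hlt⟩, Or.inl (Or.inr (by simp; omega)), ih _ b (by simp; omega)⟩

lemma clique_walk (n p : ℕ) (hp : 3 ≤ p) (hn : p < n) :
    ∀ (m : ℕ), 2 ≤ m → ∀ (a b : Fin n), n - p ≤ a.val → n - p ≤ b.val →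
      GWalk (HAdj n p) m a b := by
  intro m hm
  induction m, hm using Nat.le_induction with
  | base =>
    intro a b ha hb
    have hex : ∃ v, n - p ≤ v ∧ v < n ∧ v ≠ a.val ∧ v ≠ b.val := by
      by_cases h1 : n - p ≠ a.val ∧ n - p ≠ b.val
      · exact ⟨n - p, by omega⟩
      · by_cases h2 : n - p + 1 ≠ a.val ∧ n - p + 1 ≠ b.val
        · exact ⟨n - p + 1, by omega⟩
        · exact ⟨n - p + 2, by omega⟩
    obtain ⟨v, hv1, hv2, hv3, hv4⟩ := hex
    refine ⟨⟨v, hv2⟩, Or.inr ⟨fun h => hv3 (congrArg Fin.val h).symm, ha, hv1⟩,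
      ⟨b, Or.inr ⟨fun h => hv4 (congrArg Fin.val h), hv1, hb⟩, rfl⟩⟩
  | succ m hm ih =>
    intro a b ha hb
    have hex : ∃ v, n - p ≤ v ∧ v < n ∧ v ≠ a.val := by
      by_cases h1 : n - p ≠ a.val
      · exact ⟨n - p, by omega⟩
      · exact ⟨n - p + 1, by omega⟩
    obtain ⟨v, hv1, hv2, hv3⟩ := hex
    exact ⟨⟨v, hv2⟩, Or.inr ⟨fun h => hv3 (congrArg Fin.val h).symm, ha, hv1⟩,
      ih ⟨v, hv2⟩ b hv1 hb⟩

def WInv (q k x y : ℕ) : Prop :=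
  (x ≤ q → y ≤ q → (y ≤ k + x ∧ x ≤ k + y ∧
    ((k + x + y) % 2 = 1 → 2 * q + 3 ≤ k + x + y)))
  ∧ (x ≤ q → q < y → (q + 1 ≤ k + x ∧ ((k + q + x) % 2 = 0 → q + 2 ≤ k + x)))
  ∧ (q < x → y ≤ q → (q + 1 ≤ k + y ∧ ((k + q + y) % 2 = 0 → q + 2 ≤ k + y)))
  ∧ (q < x → q < y → ((x = y → k % 2 = 1 → 3 ≤ k) ∧ (x ≠ y → 1 ≤ k)))

lemma winv_base (q x : ℕ) : WInv q 0 x x := by unfold WInv; omega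

set_option maxHeartbeats 1000000 in
lemma winv_step (n p q k x y z : ℕ) (hp : 3 ≤ p) (hq : q = n - p) (hn : p < n)
    (hx : x < n) (hy : y < n) (hz : z < n)
    (hadj : (x + 1 = z ∨ z + 1 = x) ∨ (x ≠ z ∧ q ≤ x ∧ q ≤ z))
    (hI : WInv q k z y) : WInv q (k + 1) x y := by
  unfold WInv at hI ⊢
  obtain ⟨h1, h2, h3, h4⟩ := hI
  rcases hadj with (h | h) | ⟨hne, ha, hb⟩ <;>
    refine ⟨?_, ?_, ?_, ?_⟩ <;> intros <;> omega

lemma gwalk_inv (n p : ℕ) (hp : 3 ≤ p) (hn : p < n) :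
    ∀ (k : ℕ) (x y : Fin n), GWalk (HAdj n p) k x y → WInv (n - p) k x.val y.val := by
  intro k
  induction k with
  | zero =>
    intro x y h
    have hxy : x = y := h
    subst hxy
    exact winv_base _ _
  | succ k ih =>
    intro x y h
    obtain ⟨z, hadj, hw⟩ := h
    have hadj' : (x.val + 1 = z.val ∨ z.val + 1 = x.val) ∨
        (x.val ≠ z.val ∧ n - p ≤ x.val ∧ n - p ≤ z.val) := by
      rcases hadj with h | ⟨hne, h1, h2⟩
      · exact Or.inl h
      · exact Or.inr ⟨fun h => hne (Fin.ext h), h1, h2⟩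
    exact winv_step n p (n - p) k x.val y.val z.val hp rfl hn x.isLt y.isLt z.isLt
      hadj' (ih z y hw)

theorem stmt12 (n p : ℕ) (hp : 3 ≤ p) (hn : p < n) :
    IsLeast {m : ℕ | ∀ x y : Fin n, ∀ k ≥ m, GWalk (HAdj n p) k x y}
      (2 * n - 2 * p + 2) := by
  have hqlt : n - p < n := by omega
  constructor
  · intro x y k hk
    have hkq : 2 * (n - p) + 2 ≤ k := by omega
    set q := n - p with hqdef
    let vq : Fin n := ⟨q, hqlt⟩
    by_cases hx : x.val ≤ q <;> by_cases hy : y.val ≤ q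
    · have h1 := walk_up n p (q - x.val) x vq (by show x.val + (q - x.val) = q; omega)
      have h2 := clique_walk n p hp hn (k - (q - x.val) - (q - y.val)) (by omega)
        vq vq (le_refl q) (le_refl q)
      have h3 := walk_down n p (q - y.val) vq y (by show y.val + (q - y.val) = q; omega)
      have hcat := gwalk_concat _ _ _ _ _ h1 (gwalk_concat _ _ _ _ _ h2 h3)
      have heq : (q - x.val) + ((k - (q - x.val) - (q - y.val)) + (q - y.val)) = k := by
        omega
      exact heq ▸ hcat
    · have h1 := walk_up n p (q - x.val) x vq (by show x.val + (q - x.val) = q; omega)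
      have h2 := clique_walk n p hp hn (k - (q - x.val)) (by omega)
        vq y (le_refl q) (by omega)
      have hcat := gwalk_concat _ _ _ _ _ h1 h2
      have heq : (q - x.val) + (k - (q - x.val)) = k := by omega
      exact heq ▸ hcat
    · have h2 := clique_walk n p hp hn (k - (q - y.val)) (by omega)
        x vq (by omega) (le_refl q)
      have h3 := walk_down n p (q - y.val) vq y (by show y.val + (q - y.val) = q; omega)
      have hcat := gwalk_concat _ _ _ _ _ h2 h3
      have heq : (k - (q - y.val)) + (q - y.val) = k := by omega
      exact heq ▸ hcat
    · exact clique_walk n p hp hn k (by omega) x y (by omega) (by omega)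
  · intro m hm
    by_contra hlt
    push_neg at hlt
    have h0 : (0 : ℕ) < n := by omega
    have hw := hm ⟨0, h0⟩ ⟨0, h0⟩ (2 * (n - p) + 1) (by omega)
    have hinv := gwalk_inv n p hp hn (2 * (n - p) + 1) ⟨0, h0⟩ ⟨0, h0⟩ hw
    unfold WInv at hinv
    simp only [Fin.val_mk] at hinv
    omega
end

section
/- Let G₁, G₂ be connected graphs both containing odd cycles, with exponents γ₁, γ₂. Then the diameter of G₁ ⊗ G₂ is at most max{γ₁, γ₂}. -/
lemma GWalk.kron {V₁ V₂ : Type*} {adj₁ : V₁ → V₁ → Prop} {adj₂ : V₂ → V₂ → Prop} :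
    ∀ {k : ℕ} {a b : V₁} {c d : V₂}, GWalk adj₁ k a b → GWalk adj₂ k c d →
      GWalk (KronAdj adj₁ adj₂) k (a, c) (b, d)
  | 0, _, _, _, _, h1, h2 => by cases h1; cases h2; rfl
  | k + 1, _, _, _, _, ⟨z1, hz1, hw1⟩, ⟨z2, hz2, hw2⟩ =>
      ⟨(z1, z2), ⟨hz1, hz2⟩, GWalk.kron hw1 hw2⟩

theorem stmt15 {V₁ V₂ : Type*} (adj₁ : V₁ → V₁ → Prop) (adj₂ : V₂ → V₂ → Prop)
    (hsymm₁ : Symmetric adj₁) (hsymm₂ : Symmetric adj₂)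
    (hc₁ : GConnected adj₁) (hc₂ : GConnected adj₂)
    (hodd₁ : HasOddClosedWalk adj₁) (hodd₂ : HasOddClosedWalk adj₂)
    (γ₁ γ₂ D : ℕ)
    (hγ₁ : IsLeast {m : ℕ | ∀ x y : V₁, ∀ k ≥ m, GWalk adj₁ k x y} γ₁)
    (hγ₂ : IsLeast {m : ℕ | ∀ x y : V₂, ∀ k ≥ m, GWalk adj₂ k x y} γ₂)
    (hD : IsGreatest {m : ℕ | ∃ x y : V₁ × V₂, m = GDist (KronAdj adj₁ adj₂) x y} D) :
    D ≤ max γ₁ γ₂ := by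
  obtain ⟨⟨x, y, hxy⟩, -⟩ := hD
  subst hxy
  apply Nat.sInf_le
  exact GWalk.kron (hγ₁.1 x.1 y.1 _ (le_max_left _ _)) (hγ₂.1 x.2 y.2 _ (le_max_right _ _))
end
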